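/- arXiv:2601.22712 — 3 statements merged into one kernel-verified Lean document; each statement's English description precedes it below -/
import Mathlib

section
/- Let d ≥ 1, let v : ℝ^d × [0,1] → ℝ^d be continuous and uniformly Lipschitz in its first argument with flow X, and let g : ℝ^d → ℝ be differentiable. Suppose there is a constant C ≥ 0 such that ⟨v(x,t), ∇g(x)⟩ ≤ C·|g(x)| for all x ∈ ℝ^d and t ∈ [0,1] (a quantitative version of tangency of v to the level set {g = 0}). Then for every ξ ∈ ℝ^d with g(ξ) ≤ 0 one has g(X(ξ,t)) ≤ 0 for all t ∈ [0,1]; that is, the flow leaves the sublevel set {g ≤ 0} invariant. -/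
/-!
Along a trajectory, `φ(t) = g(X(ξ,t))` satisfies `φ' = ⟪∇g, v⟫ ≤ C·φ` wherever `φ > 0`. To see
`φ(s) ≤ 0`, compare `φ` with the barrier `B(t) = ε·exp((C+1)(t - s))`: `φ` starts below `B`, and
at a first contact `φ = B > 0` we would have `φ' ≤ C·B < (C+1)·B = B'`. Hence `φ(s) ≤ B(s) = ε`
for every `ε > 0`.
-/

open Set Real
open scoped RealInnerProductSpace

theorem image_nonpos_of_deriv_right_le_mul_of_pos {f f' : ℝ → ℝ} {a b C : ℝ}
    (hf : ContinuousOn f (Icc a b)) (hf' : ∀ x ∈ Ico a b, HasDerivWithinAt f (f' x) (Ici x) x)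
    (ha : f a ≤ 0) (bound : ∀ x ∈ Ico a b, 0 < f x → f' x ≤ C * f x) :
    ∀ ⦃x⦄, x ∈ Icc a b → f x ≤ 0 := by
  intro x hx
  refine le_of_forall_pos_le_add fun ε hε => ?_
  set B : ℝ → ℝ := fun y => ε * exp ((C + 1) * (y - x))
  have hB_pos : ∀ y, 0 < B y := fun y => mul_pos hε (exp_pos _)
  have hB_deriv : ∀ y, HasDerivAt B ((C + 1) * B y) y := fun y =>
    ((((hasDerivAt_id' y).sub_const x).const_mul (C + 1)).exp.const_mul ε).congr_deriv
      (by simp only [B]; ring)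
  have hfB : f x ≤ B x := image_le_of_deriv_right_lt_deriv_boundary hf hf' (ha.trans (hB_pos a).le)
    hB_deriv (fun y hy hfy => by
      have hf'y := bound y hy (hfy ▸ hB_pos y)
      rw [hfy] at hf'y
      linarith [hB_pos y]) hx
  simpa [B] using hfB

theorem flow_invariance_sublevel_set_general
    (d : ℕ)
    (v : EuclideanSpace ℝ (Fin d) → ℝ → EuclideanSpace ℝ (Fin d))
    (X : EuclideanSpace ℝ (Fin d) → ℝ → EuclideanSpace ℝ (Fin d))
    (hX0 : ∀ ξ, X ξ 0 = ξ)
    (hX : ∀ ξ, ∀ t ∈ Set.Icc (0:ℝ) 1, HasDerivAt (X ξ) (v (X ξ t) t) t)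
    (g : EuclideanSpace ℝ (Fin d) → ℝ) (hg : Differentiable ℝ g)
    (C : ℝ)
    (htang : ∀ x : EuclideanSpace ℝ (Fin d), ∀ t ∈ Set.Icc (0:ℝ) 1,
      ⟪v x t, gradient g x⟫ ≤ C * |g x|) :
    ∀ ξ : EuclideanSpace ℝ (Fin d), g ξ ≤ 0 → ∀ t ∈ Set.Icc (0:ℝ) 1, g (X ξ t) ≤ 0 := by
  intro ξ hξ
  have hφ : ∀ t ∈ Icc (0:ℝ) 1,
      HasDerivAt (g ∘ X ξ) (fderiv ℝ g (X ξ t) (v (X ξ t) t)) t := fun t ht =>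
    (hg (X ξ t)).hasFDerivAt.comp_hasDerivAt t (hX ξ t ht)
  refine image_nonpos_of_deriv_right_le_mul_of_pos (C := C)
    (fun t ht => (hφ t ht).continuousAt.continuousWithinAt)
    (fun t ht => (hφ t (Ico_subset_Icc_self ht)).hasDerivWithinAt) (by simpa [hX0] using hξ) ?_
  intro t ht hpos
  calc fderiv ℝ g (X ξ t) (v (X ξ t) t) = ⟪v (X ξ t) t, gradient g (X ξ t)⟫ := by
        rw [real_inner_comm, inner_gradient_left]
    _ ≤ C * |g (X ξ t)| := htang _ t (Ico_subset_Icc_self ht)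
    _ = C * (g ∘ X ξ) t := by rw [abs_of_pos hpos, Function.comp_apply]

/-- Let `v : ℝ^d × [0,1] → ℝ^d` be continuous and uniformly Lipschitz in its
first argument with flow `X`, and let `g : ℝ^d → ℝ` be differentiable. If there is `C ≥ 0` with
`⟨v(x,t), ∇g(x)⟩ ≤ C·|g(x)|` for all `x` and `t ∈ [0,1]`, then the flow leaves the sublevel set
`{g ≤ 0}` invariant: `g(ξ) ≤ 0` implies `g(X(ξ,t)) ≤ 0` for all `t ∈ [0,1]`. -/
theorem flow_invariance_sublevel_set
    (d : ℕ) (hd : 1 ≤ d)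
    (v : EuclideanSpace ℝ (Fin d) → ℝ → EuclideanSpace ℝ (Fin d))
    (hv_cont : Continuous (fun p : EuclideanSpace ℝ (Fin d) × ℝ => v p.1 p.2))
    (L : ℝ) (hL : 0 < L)
    (hv_lip : ∀ t ∈ Set.Icc (0:ℝ) 1, ∀ x y : EuclideanSpace ℝ (Fin d),
      ‖v x t - v y t‖ ≤ L * ‖x - y‖)
    (X : EuclideanSpace ℝ (Fin d) → ℝ → EuclideanSpace ℝ (Fin d))
    (hX0 : ∀ ξ, X ξ 0 = ξ)
    (hX : ∀ ξ, ∀ t ∈ Set.Icc (0:ℝ) 1, HasDerivAt (X ξ) (v (X ξ t) t) t)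
    (g : EuclideanSpace ℝ (Fin d) → ℝ) (hg : Differentiable ℝ g)
    (C : ℝ) (hC : 0 ≤ C)
    (htang : ∀ x : EuclideanSpace ℝ (Fin d), ∀ t ∈ Set.Icc (0:ℝ) 1,
      ⟪v x t, gradient g x⟫ ≤ C * |g x|) :
    ∀ ξ : EuclideanSpace ℝ (Fin d), g ξ ≤ 0 → ∀ t ∈ Set.Icc (0:ℝ) 1, g (X ξ t) ≤ 0 :=
  flow_invariance_sublevel_set_general d v X hX0 hX g hg C htang
end

section
/- Let d ≥ 1 and let v : ℝ^d × [0,1] → ℝ^d be continuous with ‖v(x,t) − v(y,t)‖ ≤ L‖x − y‖ for all x, y ∈ ℝ^d, t ∈ [0,1], where L > 0. Let W be a nonempty family of continuous vector fields w : ℝ^d × [0,1] → ℝ^d, each uniformly Lipschitz in its first argument. Denote by F[u] := X_u(·,1) the time-one flow map of a field u, and set Φ := F[v]. Then the infimum over w ∈ W of sup_{ξ ∈ ℝ^d} ‖Φ(ξ) − F[w](ξ)‖ is at most ((e^{L} − 1)/L) times the infimum over w ∈ W of sup_{(x,t) ∈ ℝ^d × [0,1]} ‖v(x,t) − w(x,t)‖.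 -/
open scoped ENNReal NNReal

/-!
Two flows starting at the same point and driven by fields that differ by at most `ε` in sup norm,
one of them `L`-Lipschitz, drift apart at rate `‖Ẋ - Ẏ‖ ≤ L ‖X - Y‖ + ε`; Grönwall's inequality
gives `‖X(1) - Y(1)‖ ≤ ε (e^L - 1) / L`. Taking the supremum over initial points and then the
infimum over the approximating fields yields the claim.
-/

open Set

theorem dist_le_gronwallBound_of_hasDerivAt_of_norm_sub_le
    {E : Type*} [NormedAddCommGroup E] [NormedSpace ℝ E]
    {v w : E → ℝ → E} {X Y : ℝ → E} {K : ℝ≥0} {ε a b : ℝ}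
    (hv : ∀ t ∈ Icc a b, LipschitzWith K (v · t))
    (hX : ∀ t ∈ Icc a b, HasDerivAt X (v (X t) t) t)
    (hY : ∀ t ∈ Icc a b, HasDerivAt Y (w (Y t) t) t)
    (hvw : ∀ t ∈ Icc a b, ∀ x, ‖v x t - w x t‖ ≤ ε)
    (hXY : X a = Y a) :
    ∀ t ∈ Icc a b, dist (X t) (Y t) ≤ gronwallBound 0 K ε (t - a) := by
  have hXY' : dist (X a) (Y a) ≤ 0 := by rw [hXY, dist_self]
  simpa only [zero_add] using
    dist_le_of_approx_trajectories_ODE_of_mem (v := fun t x => v x t) (s := fun _ => univ)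
      (εf := 0) (εg := ε)
      (fun t ht => (hv t (Ico_subset_Icc_self ht)).lipschitzOnWith)
      (fun t ht => (hX t ht).continuousAt.continuousWithinAt)
      (fun t ht => (hX t (Ico_subset_Icc_self ht)).hasDerivWithinAt)
      (fun t _ => (dist_self _).le) (fun _ _ => trivial)
      (fun t ht => (hY t ht).continuousAt.continuousWithinAt)
      (fun t ht => (hY t (Ico_subset_Icc_self ht)).hasDerivWithinAt)
      (fun t ht => by rw [dist_eq_norm, norm_sub_rev]; exact hvw t (Ico_subset_Icc_self ht) _)
      (fun _ _ => trivial) hXY'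

theorem coe_nnnorm_le_ofReal_iff {E : Type*} [SeminormedAddGroup E] {z : E} {ε : ℝ}
    (hε : 0 ≤ ε) : (‖z‖₊ : ℝ≥0∞) ≤ ENNReal.ofReal ε ↔ ‖z‖ ≤ ε := by
  rw [← enorm_eq_nnnorm, ← ofReal_norm, ENNReal.ofReal_le_ofReal_iff hε]

theorem ENNReal.le_ofReal_mul_of_forall_le {a b : ℝ≥0∞} {c : ℝ} (hc : 0 < c)
    (h : ∀ ε : ℝ, 0 ≤ ε → b ≤ ENNReal.ofReal ε → a ≤ ENNReal.ofReal (c * ε)) :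
    a ≤ ENNReal.ofReal c * b := by
  rcases eq_or_ne b ∞ with rfl | hb
  · rw [ENNReal.mul_top (ENNReal.ofReal_pos.2 hc).ne']
    exact le_top
  · have hab := h b.toReal ENNReal.toReal_nonneg (ENNReal.ofReal_toReal hb).ge
    rwa [ENNReal.ofReal_mul hc.le, ENNReal.ofReal_toReal hb] at hab

theorem flow_map_best_approximation_general
    (d : ℕ)
    (v : EuclideanSpace ℝ (Fin d) → ℝ → EuclideanSpace ℝ (Fin d))
    (L : ℝ) (hL : 0 < L)
    (hv_lip : ∀ t ∈ Set.Icc (0:ℝ) 1, ∀ x y : EuclideanSpace ℝ (Fin d),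
      ‖v x t - v y t‖ ≤ L * ‖x - y‖)
    (W : Set (EuclideanSpace ℝ (Fin d) → ℝ → EuclideanSpace ℝ (Fin d)))
    -- `XF u` is the flow of the vector field `u`, for `u = v` and for each `u ∈ W`
    (XF : (EuclideanSpace ℝ (Fin d) → ℝ → EuclideanSpace ℝ (Fin d)) →
      EuclideanSpace ℝ (Fin d) → ℝ → EuclideanSpace ℝ (Fin d))
    (hXF0 : ∀ u, u = v ∨ u ∈ W → ∀ ξ, XF u ξ 0 = ξ)
    (hXF : ∀ u, u = v ∨ u ∈ W → ∀ ξ, ∀ t ∈ Set.Icc (0:ℝ) 1,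
      HasDerivAt (XF u ξ) (u (XF u ξ t) t) t) :
    (⨅ w : W, ⨆ ξ : EuclideanSpace ℝ (Fin d),
        (‖XF v ξ 1 - XF w.1 ξ 1‖₊ : ℝ≥0∞))
      ≤ ENNReal.ofReal ((Real.exp L - 1) / L) *
        ⨅ w : W, ⨆ x : EuclideanSpace ℝ (Fin d), ⨆ t ∈ Set.Icc (0:ℝ) 1,
          (‖v x t - w.1 x t‖₊ : ℝ≥0∞) := by
  have hC : 0 < (Real.exp L - 1) / L := div_pos (by linarith [Real.add_one_lt_exp hL.ne']) hL
  have hv : ∀ t ∈ Icc (0:ℝ) 1, LipschitzWith L.toNNReal (v · t) := fun t ht =>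
    LipschitzWith.of_dist_le_mul fun x y => by
      simpa only [dist_eq_norm, Real.coe_toNNReal L hL.le] using hv_lip t ht x y
  rw [ENNReal.mul_iInf_of_ne (ENNReal.ofReal_pos.2 hC).ne' ENNReal.ofReal_ne_top]
  refine iInf_mono fun w => ENNReal.le_ofReal_mul_of_forall_le hC fun ε hε hvw => iSup_le fun ξ => ?_
  have hvw' : ∀ t ∈ Icc (0:ℝ) 1, ∀ x, ‖v x t - w.1 x t‖ ≤ ε := fun t ht x =>
    (coe_nnnorm_le_ofReal_iff hε).1 <|
      (le_iSup₂ (f := fun t (_ : t ∈ Icc (0:ℝ) 1) => (‖v x t - w.1 x t‖₊ : ℝ≥0∞)) t ht).trans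
        ((le_iSup (fun x => ⨆ t ∈ Icc (0:ℝ) 1, (‖v x t - w.1 x t‖₊ : ℝ≥0∞)) x).trans hvw)
  have hdist := dist_le_gronwallBound_of_hasDerivAt_of_norm_sub_le hv
    (hXF v (.inl rfl) ξ) (hXF w.1 (.inr w.2) ξ) hvw'
    ((hXF0 v (.inl rfl) ξ).trans (hXF0 w.1 (.inr w.2) ξ).symm) 1 ⟨zero_le_one, le_rfl⟩
  rw [coe_nnnorm_le_ofReal_iff (mul_nonneg hC.le hε), ← dist_eq_norm]
  calc dist (XF v ξ 1) (XF w.1 ξ 1) ≤ gronwallBound 0 L ε 1 := by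
        simpa only [Real.coe_toNNReal L hL.le, sub_zero] using hdist
    _ = (Real.exp L - 1) / L * ε := by
        rw [gronwallBound_of_K_ne_0 hL.ne']
        ring_nf

/-- Let `v` be continuous and `L`-Lipschitz in its first argument, and let `W`
be a nonempty family of continuous vector fields, each uniformly Lipschitz in its first
argument. Denoting by `F[u] = XF u (·) 1` the time-one flow map of a field `u` and
`Φ = F[v]`, the infimum over `w ∈ W` of `sup_ξ ‖Φ(ξ) − F[w](ξ)‖` is at most
`(e^L − 1)/L` times the infimum over `w ∈ W` of `sup_{(x,t) ∈ ℝ^d × [0,1]} ‖v(x,t) − w(x,t)‖`. -/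
theorem flow_map_best_approximation
    (d : ℕ) (hd : 1 ≤ d)
    (v : EuclideanSpace ℝ (Fin d) → ℝ → EuclideanSpace ℝ (Fin d))
    (hv_cont : Continuous (fun p : EuclideanSpace ℝ (Fin d) × ℝ => v p.1 p.2))
    (L : ℝ) (hL : 0 < L)
    (hv_lip : ∀ t ∈ Set.Icc (0:ℝ) 1, ∀ x y : EuclideanSpace ℝ (Fin d),
      ‖v x t - v y t‖ ≤ L * ‖x - y‖)
    (W : Set (EuclideanSpace ℝ (Fin d) → ℝ → EuclideanSpace ℝ (Fin d)))
    (hW_ne : W.Nonempty)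
    (hW_cont : ∀ w ∈ W, Continuous (fun p : EuclideanSpace ℝ (Fin d) × ℝ => w p.1 p.2))
    (hW_lip : ∀ w ∈ W, ∃ Lw > (0:ℝ), ∀ t ∈ Set.Icc (0:ℝ) 1,
      ∀ x y : EuclideanSpace ℝ (Fin d), ‖w x t - w y t‖ ≤ Lw * ‖x - y‖)
    -- `XF u` is the flow of the vector field `u`, for `u = v` and for each `u ∈ W`
    (XF : (EuclideanSpace ℝ (Fin d) → ℝ → EuclideanSpace ℝ (Fin d)) →
      EuclideanSpace ℝ (Fin d) → ℝ → EuclideanSpace ℝ (Fin d))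
    (hXF0 : ∀ u, u = v ∨ u ∈ W → ∀ ξ, XF u ξ 0 = ξ)
    (hXF : ∀ u, u = v ∨ u ∈ W → ∀ ξ, ∀ t ∈ Set.Icc (0:ℝ) 1,
      HasDerivAt (XF u ξ) (u (XF u ξ t) t) t) :
    (⨅ w : W, ⨆ ξ : EuclideanSpace ℝ (Fin d),
        (‖XF v ξ 1 - XF w.1 ξ 1‖₊ : ℝ≥0∞))
      ≤ ENNReal.ofReal ((Real.exp L - 1) / L) *
        ⨅ w : W, ⨆ x : EuclideanSpace ℝ (Fin d), ⨆ t ∈ Set.Icc (0:ℝ) 1,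
          (‖v x t - w.1 x t‖₊ : ℝ≥0∞) :=
  flow_map_best_approximation_general d v L hL hv_lip W XF hXF0 hXF
end

section
/- Let Z be a finite nonempty set and let Θ be an arbitrary set. Let p : Θ × Z → ℝ satisfy p(θ, z) > 0 for all θ ∈ Θ and z ∈ Z. Define L(θ) := log(Σ_{z∈Z} p(θ, z)), the responsibilities r(θ′, z) := p(θ′, z) / Σ_{w∈Z} p(θ′, w), and the expected complete-data log-likelihood Q(θ | θ′) := Σ_{z∈Z} r(θ′, z)·log p(θ, z). Then for all θ, θ′ ∈ Θ: L(θ) − L(θ′) ≥ Q(θ | θ′) − Q(θ′ | θ′). In particular, any θ with Q(θ | θ′) ≥ Q(θ′ | θ′) satisfies L(θ) ≥ L(θ′). -/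
open Finset

/-- Fundamental inequality of the EM algorithm: for a finite nonempty latent
set `Z`, a parameter set `Θ` and positive weights `p : Θ × Z → ℝ`, with
`L(θ) = log Σ_z p(θ,z)`, responsibilities `r(θ′,z) = p(θ′,z)/Σ_w p(θ′,w)` and
`Q(θ|θ′) = Σ_z r(θ′,z) log p(θ,z)`, one has
`L(θ) − L(θ′) ≥ Q(θ|θ′) − Q(θ′|θ′)` for all `θ, θ′`; in particular `Q(θ|θ′) ≥ Q(θ′|θ′)`
implies `L(θ) ≥ L(θ′)`. -/
theorem em_bound_optimization_inequality
    (Z : Type*) [Fintype Z] [Nonempty Z]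
    (Θ : Type*)
    (p : Θ → Z → ℝ) (hp : ∀ θ z, 0 < p θ z)
    (θ θ' : Θ) :
    (Real.log (∑ z, p θ z) - Real.log (∑ z, p θ' z) ≥
      (∑ z, (p θ' z / ∑ w, p θ' w) * Real.log (p θ z)) -
        (∑ z, (p θ' z / ∑ w, p θ' w) * Real.log (p θ' z))) ∧
    ((∑ z, (p θ' z / ∑ w, p θ' w) * Real.log (p θ z)) ≥
        (∑ z, (p θ' z / ∑ w, p θ' w) * Real.log (p θ' z)) →
      Real.log (∑ z, p θ z) ≥ Real.log (∑ z, p θ' z)) := by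
  have hS' : (0:ℝ) < ∑ w, p θ' w := Finset.sum_pos (fun z _ => hp θ' z) univ_nonempty
  set S' : ℝ := ∑ w, p θ' w with hS'def
  have key : Real.log (∑ z, p θ z) - Real.log S' ≥
      (∑ z, (p θ' z / S') * Real.log (p θ z)) -
        (∑ z, (p θ' z / S') * Real.log (p θ' z)) := by
    have hw : ∀ z ∈ (univ : Finset Z), 0 ≤ p θ' z / S' :=
      fun z _ => div_nonneg (hp θ' z).le hS'.le
    have hw1 : ∑ z, p θ' z / S' = 1 := by
      rw [← Finset.sum_div, div_self hS'.ne']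
    have hmem : ∀ z ∈ (univ : Finset Z), p θ z / p θ' z ∈ Set.Ioi (0:ℝ) :=
      fun z _ => div_pos (hp θ z) (hp θ' z)
    have := strictConcaveOn_log_Ioi.concaveOn.le_map_sum hw hw1 hmem
    simp only [smul_eq_mul] at this
    have hsum : ∑ z, (p θ' z / S') * (p θ z / p θ' z) = (∑ z, p θ z) / S' := by
      rw [Finset.sum_div]
      refine Finset.sum_congr rfl fun z _ => ?_
      rw [div_mul_div_comm, mul_comm (p θ' z) (p θ z), mul_div_mul_right _ _ (hp θ' z).ne']
    have hlogdiv : ∀ z, Real.log (p θ z / p θ' z) = Real.log (p θ z) - Real.log (p θ' z) :=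
      fun z => Real.log_div (hp θ z).ne' (hp θ' z).ne'
    rw [hsum, Real.log_div (Finset.sum_pos (fun z _ => hp θ z) univ_nonempty).ne' hS'.ne'] at this
    calc (∑ z, (p θ' z / S') * Real.log (p θ z)) -
          (∑ z, (p θ' z / S') * Real.log (p θ' z))
        = ∑ z, (p θ' z / S') * Real.log (p θ z / p θ' z) := by
          rw [← Finset.sum_sub_distrib]
          exact Finset.sum_congr rfl fun z _ => by rw [hlogdiv z, mul_sub]
      _ ≤ Real.log (∑ z, p θ z) - Real.log S' := this
  exact ⟨key, fun h => by linarith⟩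
end
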